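/- arXiv:2003.09391 — 5 statements merged into one kernel-verified Lean document; each statement's English description precedes it below -/
import Mathlib

section
/- Let a ∈ ℝ^n with a_1 ≤ a_2 ≤ ⋯ ≤ a_n and δ > 0. Define z = 1/k + (1/(2kδ)) ∑_{j=1}^k a_j and s_j = max(z − a_j/(2δ), 0). If z − a_k/(2δ) ≥ 0 and z − a_{k+1}/(2δ) ≤ 0, then s lies on the probability simplex: s_j ≥ 0 for all j and ∑_j s_j = 1, with s_j = 0 for j > k. -/
/-- The threshold `z` is chosen exactly so that the `k` active coordinates sum to one. -/
lemma sum_range_threshold_sub_div_eq_one {k : ℕ} (hk : k ≠ 0) {δ : ℝ} (hδ : δ ≠ 0)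
    (a : ℕ → ℝ) :
    ∑ j ∈ Finset.range k,
      (1 / k + 1 / (2 * k * δ) * ∑ i ∈ Finset.range k, a i - a j / (2 * δ)) = 1 := by
  rw [Finset.sum_sub_distrib, Finset.sum_const, Finset.card_range, nsmul_eq_mul,
    ← Finset.sum_div]
  field_simp
  ring

theorem thresholded_solution_on_simplex
    (n k : ℕ) (hk : 1 ≤ k) (hkn : k < n)
    (a : ℕ → ℝ) (hsort : ∀ i j, i ≤ j → j < n → a i ≤ a j)
    (δ : ℝ) (hδ : 0 < δ)
    (z : ℝ) (hz : z = 1 / k + (1 / (2 * k * δ)) * ∑ j ∈ Finset.range k, a j)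
    (s : ℕ → ℝ) (hs : s = fun j => max (z - a j / (2 * δ)) 0)
    (hpos : 0 ≤ z - a (k - 1) / (2 * δ))
    (hneg : z - a k / (2 * δ) ≤ 0) :
    (∀ j, j < n → 0 ≤ s j) ∧
    (∑ j ∈ Finset.range n, s j = 1) ∧
    (∀ j, k ≤ j → j < n → s j = 0) := by
  subst hs
  have h2δ : 0 < 2 * δ := by positivity
  have gap_antitone {i j : ℕ} (hij : i ≤ j) (hj : j < n) :
      z - a j / (2 * δ) ≤ z - a i / (2 * δ) :=
    sub_le_sub_left (div_le_div_of_nonneg_right (hsort i j hij hj) h2δ.le) z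
  have inactive : ∀ j, k ≤ j → j < n → max (z - a j / (2 * δ)) 0 = 0 := fun j hkj hj =>
    max_eq_right ((gap_antitone hkj hj).trans hneg)
  have active : ∀ j ∈ Finset.range k, max (z - a j / (2 * δ)) 0 = z - a j / (2 * δ) :=
    fun j hj => max_eq_left (hpos.trans (gap_antitone (by simp at hj; omega) (by omega)))
  refine ⟨fun j _ => le_max_right _ _, ?_, inactive⟩
  rw [← Finset.sum_subset (Finset.range_subset_range.mpr hkn.le) fun j hjn hjk =>
      inactive j (by simpa using hjk) (by simpa using hjn),
    Finset.sum_congr rfl active, hz]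
  exact sum_range_threshold_sub_div_eq_one (by omega) hδ.ne' a
end

section
/- Let a ∈ ℝ^n sorted ascending, δ > 0, z = 1/k + (1/(2kδ)) ∑_{j=1}^k a_j, and s_j = max(z − a_j/(2δ), 0). If z − a_k/(2δ) > 0 and z − a_{k+1}/(2δ) ≤ 0, then s is the unique minimizer of ‖s + a/(2δ)‖² over the probability simplex (it satisfies the KKT conditions of the projection onto the simplex). -/
open BigOperators

theorem thresholded_solution_is_unique_minimizer
    (n k : ℕ) (hk : 1 ≤ k) (hkn : k < n)
    (a : ℕ → ℝ) (hsort : ∀ i j, i ≤ j → j < n → a i ≤ a j)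
    (δ : ℝ) (hδ : 0 < δ)
    (z : ℝ) (hz : z = 1 / k + (1 / (2 * k * δ)) * ∑ j ∈ Finset.range k, a j)
    (s : ℕ → ℝ) (hs : s = fun j => max (z - a j / (2 * δ)) 0)
    (hpos : 0 < z - a (k - 1) / (2 * δ))
    (hneg : z - a k / (2 * δ) ≤ 0)
    (Simplex : Set (ℕ → ℝ))
    (hSimplex : Simplex = {t : ℕ → ℝ | (∀ j, j < n → 0 ≤ t j) ∧
      ∑ j ∈ Finset.range n, t j = 1}) :
    s ∈ Simplex ∧
    ∀ t ∈ Simplex, (∃ j, j < n ∧ t j ≠ s j) →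
      ∑ j ∈ Finset.range n, (s j + a j / (2 * δ)) ^ 2
        < ∑ j ∈ Finset.range n, (t j + a j / (2 * δ)) ^ 2 := by
  have hkpos : (0:ℝ) < (k:ℝ) := by exact_mod_cast hk
  have h2δ : (0:ℝ) < 2 * δ := by linarith
  -- s j for j < k
  have hsj1 : ∀ j, j < k → s j = z - a j / (2 * δ) := by
    intro j hj
    have hle : a j / (2 * δ) ≤ a (k - 1) / (2 * δ) := by
      gcongr
      exact hsort j (k - 1) (by omega) (by omega)
    rw [hs]
    exact max_eq_left (by linarith)
  -- s j for k ≤ j < n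
  have hzc : ∀ j, k ≤ j → j < n → z ≤ a j / (2 * δ) := by
    intro j hj hjn
    have hle : a k / (2 * δ) ≤ a j / (2 * δ) := by
      gcongr
      exact hsort k j hj hjn
    linarith
  have hsj2 : ∀ j, k ≤ j → j < n → s j = 0 := by
    intro j hj hjn
    rw [hs]
    exact max_eq_right (by have := hzc j hj hjn; linarith)
  have hsnn : ∀ j, 0 ≤ s j := by
    intro j; rw [hs]; exact le_max_right _ _
  have hsum : ∑ j ∈ Finset.range n, s j = 1 := by
    rw [← Finset.sum_range_add_sum_Ico _ hkn.le]
    have h1 : ∑ j ∈ Finset.range k, s j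
        = ∑ j ∈ Finset.range k, (z - a j / (2 * δ)) :=
      Finset.sum_congr rfl (fun j hj => hsj1 j (Finset.mem_range.mp hj))
    have h2 : ∑ j ∈ Finset.Ico k n, s j = 0 :=
      Finset.sum_eq_zero (fun j hj => by
        have := Finset.mem_Ico.mp hj
        exact hsj2 j this.1 this.2)
    rw [h1, h2, add_zero, Finset.sum_sub_distrib, Finset.sum_const,
      Finset.card_range, nsmul_eq_mul, ← Finset.sum_div, hz]
    field_simp
    ring
  constructor
  · rw [hSimplex]
    exact ⟨fun j _ => hsnn j, hsum⟩
  · intro t ht hex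
    obtain ⟨j0, hj0n, hj0ne⟩ := hex
    rw [hSimplex] at ht
    obtain ⟨htn, hts⟩ := ht
    have heq : ∑ j ∈ Finset.range n, (t j + a j / (2 * δ)) ^ 2
        = ∑ j ∈ Finset.range n, (s j + a j / (2 * δ)) ^ 2
          + ∑ j ∈ Finset.range n, (t j - s j) ^ 2
          + 2 * ∑ j ∈ Finset.range n, (t j - s j) * (s j + a j / (2 * δ)) := by
      rw [← Finset.sum_add_distrib, Finset.mul_sum, ← Finset.sum_add_distrib]
      exact Finset.sum_congr rfl (fun j _ => by ring)
    have hq : 0 < ∑ j ∈ Finset.range n, (t j - s j) ^ 2 := by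
      apply Finset.sum_pos' (fun j _ => sq_nonneg _)
      refine ⟨j0, Finset.mem_range.mpr hj0n, ?_⟩
      have hne : t j0 - s j0 ≠ 0 := sub_ne_zero.mpr hj0ne
      positivity
    have hcross : 0 ≤ ∑ j ∈ Finset.range n, (t j - s j) * (s j + a j / (2 * δ)) := by
      have hsplit : ∑ j ∈ Finset.range n, (t j - s j) * (s j + a j / (2 * δ))
          = ∑ j ∈ Finset.range n, (t j - s j) * z
            + ∑ j ∈ Finset.range n, (t j - s j) * ((s j + a j / (2 * δ)) - z) := by
        rw [← Finset.sum_add_distrib]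
        exact Finset.sum_congr rfl (fun j _ => by ring)
      have h1 : ∑ j ∈ Finset.range n, (t j - s j) * z = 0 := by
        rw [← Finset.sum_mul, Finset.sum_sub_distrib, hts, hsum]
        ring
      have h2 : 0 ≤ ∑ j ∈ Finset.range n, (t j - s j) * ((s j + a j / (2 * δ)) - z) := by
        apply Finset.sum_nonneg
        intro j hj
        have hjn := Finset.mem_range.mp hj
        by_cases hjk : j < k
        · rw [hsj1 j hjk]
          ring_nf
          simp
        · push_neg at hjk
          rw [hsj2 j hjk hjn]
          have h3 := hzc j hjk hjn
          have h4 := htn j hjn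
          nlinarith
      rw [hsplit, h1, zero_add]
      exact h2
    linarith
end

section
/- For a given row i, let b_{i,1} ≤ ⋯ ≤ b_{i,n} be the sorted squared distances with b_{i,k+1} > b_{i,k}; if δ equals the single-row value δ = (k/2) b_{i,k+1} − (1/2) ∑_{j=1}^k b_{i,j} > 0, then the closed-form solution s_{ij} = max(z_i − b_{ij}/(2δ), 0) has exactly k nonzero entries. -/
open BigOperators

theorem adaptive_delta_gives_k_sparse_solution
    (n k : ℕ) (hk : 1 ≤ k) (hkn : k < n)
    (b : ℕ → ℝ) (hnonneg : ∀ j, j < n → 0 ≤ b j)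
    (hsort : ∀ i j, i ≤ j → j < n → b i ≤ b j)
    (hstrict : b (k - 1) < b k)
    (δ : ℝ)
    (hδdef : δ = (k / 2 : ℝ) * b k - (1 / 2) * ∑ j ∈ Finset.range k, b j)
    (hδpos : 0 < δ)
    (z : ℝ) (hz : z = 1 / k + (1 / (2 * k * δ)) * ∑ j ∈ Finset.range k, b j)
    (s : ℕ → ℝ) (hs : s = fun j => max (z - b j / (2 * δ)) 0) :
    ((Finset.range n).filter (fun j => s j ≠ 0)).card = k := by
  have hk0 : (k : ℝ) ≠ 0 := Nat.cast_ne_zero.mpr (by omega)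
  have hδ0 : δ ≠ 0 := ne_of_gt hδpos
  set S := ∑ j ∈ Finset.range k, b j with hS
  have hzb : z * (2 * δ) = b k := by
    have h2δ : 2 * δ = k * b k - S := by rw [hδdef]; ring
    rw [hz]
    field_simp
    linear_combination h2δ
  have hkey : ∀ j, s j ≠ 0 ↔ b j < b k := by
    intro j
    rw [hs]
    simp only [ne_eq, max_eq_right_iff, not_le]
    rw [sub_pos, div_lt_iff₀ (by linarith : (0:ℝ) < 2 * δ), hzb]
  have hfilter : (Finset.range n).filter (fun j => s j ≠ 0) = Finset.range k := by
    ext j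
    simp only [Finset.mem_filter, Finset.mem_range, hkey]
    constructor
    · rintro ⟨hjn, hjb⟩
      by_contra hjk
      push_neg at hjk
      exact absurd (hsort k j hjk hjn) (not_le.mpr hjb)
    · intro hjk
      refine ⟨by omega, ?_⟩
      calc b j ≤ b (k - 1) := hsort j (k - 1) (by omega) (by omega)
        _ < b k := hstrict
  rw [hfilter, Finset.card_range]
end

section
/- Let A, B ∈ ℝ^{m×m} with A symmetric and B symmetric positive definite. Then the minimum of tr(Pᵀ A P) over all P ∈ ℝ^{m×d} satisfying Pᵀ B P = I_d equals the sum of the d smallest generalized eigenvalues of the pencil (A, B), i.e., eigenvalues λ with A v = λ B v. -/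
open Matrix BigOperators

section OldSqrt

open scoped ComplexOrder

/-- The positive semidefinite square root, as defined in Mathlib of December 2024
(`Matrix.PosSemidef.sqrt`, removed since in favour of `CFC.sqrt`). -/
noncomputable def Matrix.PosSemidef.sqrt {n 𝕜 : Type*} [Fintype n] [DecidableEq n] [RCLike 𝕜]
    {A : Matrix n n 𝕜} (hA : A.PosSemidef) : Matrix n n 𝕜 :=
  hA.1.eigenvectorUnitary.1 * diagonal ((↑) ∘ (√·) ∘ hA.1.eigenvalues) *
    (star hA.1.eigenvectorUnitary : Matrix n n 𝕜)

end OldSqrt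

/-!
With `S` the symmetric square root of `B` and `C = S⁻¹ A S⁻¹`, the substitution `Q = S P` turns
the problem into minimising `tr (Qᵀ C Q)` over `Q` with orthonormal columns, and diagonalising
`C = U Λ Uᵀ` and substituting `R = Uᵀ Q` reduces it to diagonal `Λ`. Then
`tr (Rᵀ Λ R) = ∑ λᵢ sᵢ` with `sᵢ = (R Rᵀ)ᵢᵢ` the diagonal of a rank-`d` orthogonal projection,
so `0 ≤ sᵢ ≤ 1` and `∑ sᵢ = d`. Over such weights `∑ λᵢ sᵢ` is smallest when all the mass sits
on the `d` smallest eigenvalues, and the `R` selecting the corresponding coordinates attains it.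
-/

lemma Fin.sum_castLE_eq_sum_ite {M : Type*} [AddCommMonoid M] {m d : ℕ} (hd : d ≤ m)
    (f : Fin m → M) :
    ∑ i : Fin d, f (Fin.castLE hd i) = ∑ i : Fin m, if (i : ℕ) < d then f i else 0 := by
  rw [← Finset.sum_filter]
  refine (Finset.sum_map Finset.univ (Fin.castLEEmb hd) f).symm.trans
    (congrArg (Finset.sum · f) ?_)
  ext i
  simpa using ⟨fun ⟨a, ha⟩ => ha ▸ a.2, fun h => ⟨⟨i, h⟩, rfl⟩⟩

lemma Monotone.sum_castLE_le_sum_mul {m d : ℕ} (hd : d ≤ m) {μ t : Fin m → ℝ} (hμ : Monotone μ)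
    (ht : ∀ i, t i ∈ Set.Icc 0 1) (hsum : ∑ i, t i = d) :
    ∑ i : Fin d, μ (Fin.castLE hd i) ≤ ∑ i, μ i * t i := by
  set w : Fin m → ℝ := fun i => if (i : ℕ) < d then 1 else 0
  have hμw : ∑ i : Fin d, μ (Fin.castLE hd i) = ∑ i, μ i * w i := by
    simp [Fin.sum_castLE_eq_sum_ite hd, w, mul_ite]
  have hw : ∑ i, w i = d := (Fin.sum_castLE_eq_sum_ite hd fun _ => (1 : ℝ)).symm.trans (by simp)
  obtain ⟨c, hc_lo, hc_hi⟩ : ∃ c, (∀ i : Fin m, (i : ℕ) < d → μ i ≤ c) ∧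
      ∀ i : Fin m, d ≤ (i : ℕ) → c ≤ μ i := by
    rcases m.eq_zero_or_pos with rfl | hm
    · exact ⟨0, fun i => i.elim0, fun i => i.elim0⟩
    · refine ⟨μ ⟨min d (m - 1), by omega⟩, fun i hi => hμ ?_, fun i hi => hμ ?_⟩ <;>
        simp only [Fin.le_def] <;> omega
  have hterm : ∀ i, 0 ≤ (μ i - c) * (t i - w i) := by
    intro i
    by_cases hi : (i : ℕ) < d
    · have := hc_lo i hi; have := (ht i).2; simp only [w, if_pos hi]; nlinarith
    · have := hc_hi i (not_lt.1 hi); have := (ht i).1; simp only [w, if_neg hi]; nlinarith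
  have hexpand : ∑ i, (μ i - c) * (t i - w i) =
      ∑ i, μ i * t i - ∑ i, μ i * w i - c * (∑ i, t i - ∑ i, w i) := by
    simp only [mul_sub, sub_mul, Finset.sum_sub_distrib, Finset.mul_sum]
    ring
  have := Finset.sum_nonneg fun i (_ : i ∈ Finset.univ) => hterm i
  rw [hexpand, hsum, hw] at this
  linarith

namespace Matrix

section Sqrt

open scoped ComplexOrder

variable {n 𝕜 : Type*} [Fintype n] [DecidableEq n] [RCLike 𝕜] {A : Matrix n n 𝕜}

lemma PosSemidef.isHermitian_sqrt (hA : A.PosSemidef) : hA.sqrt.IsHermitian := by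
  simp [IsHermitian, PosSemidef.sqrt, conjTranspose_mul, diagonal_conjTranspose, Matrix.mul_assoc,
    Pi.star_def, Function.comp_def, RCLike.star_def, Matrix.star_eq_conjTranspose]

lemma PosSemidef.sqrt_mul_self (hA : A.PosSemidef) : hA.sqrt * hA.sqrt = A := by
  have hU : (star hA.1.eigenvectorUnitary : Matrix n n 𝕜) * hA.1.eigenvectorUnitary = 1 :=
    Unitary.coe_star_mul_self _
  conv_rhs => rw [hA.1.spectral_theorem, Unitary.conjStarAlgAut_apply]
  simp only [PosSemidef.sqrt, Matrix.mul_assoc]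
  rw [← Matrix.mul_assoc (star _) _ _, hU, Matrix.one_mul, ← Matrix.mul_assoc (diagonal _),
    diagonal_mul_diagonal]
  congr 3
  funext i
  simp [← RCLike.ofReal_mul, Real.mul_self_sqrt (hA.eigenvalues_nonneg i)]

lemma PosDef.isUnit_sqrt (hA : A.PosDef) : IsUnit hA.posSemidef.sqrt := by
  rw [isUnit_iff_isUnit_det]
  refine isUnit_of_mul_isUnit_left (y := hA.posSemidef.sqrt.det) ?_
  rw [← det_mul, hA.posSemidef.sqrt_mul_self, ← isUnit_iff_isUnit_det]
  exact hA.isUnit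

end Sqrt

lemma transpose_submatrix_one_mul_mul_submatrix_one {n k α : Type*} [Fintype n] [DecidableEq n]
    [Fintype k] [NonAssocSemiring α] (f : k → n) (M : Matrix n n α) :
    ((1 : Matrix n n α).submatrix id f)ᵀ * M * (1 : Matrix n n α).submatrix id f =
      M.submatrix f f := by
  ext i j
  simp [mul_apply, one_apply]

lemma trace_transpose_mul_diagonal_mul {n k α : Type*} [Fintype n] [DecidableEq n] [Fintype k]
    [CommSemiring α] (R : Matrix n k α) (μ : n → α) :
    trace (Rᵀ * diagonal μ * R) = ∑ i, μ i * (R * Rᵀ) i i := by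
  rw [trace_mul_cycle, trace]
  simp [mul_diagonal, mul_comm]

lemma sum_diag_mul_transpose_of_transpose_mul_eq_one {n k α : Type*} [Fintype n] [Fintype k]
    [DecidableEq k] [CommSemiring α] {R : Matrix n k α} (hR : Rᵀ * R = 1) :
    ∑ i, (R * Rᵀ) i i = Fintype.card k := by
  change trace (R * Rᵀ) = _
  rw [trace_mul_comm, hR, trace_one]

lemma IsSymm.apply_self_mem_Icc_of_isIdempotentElem {n α : Type*} [Fintype n] [CommRing α]
    [LinearOrder α] [IsStrictOrderedRing α] {G : Matrix n n α} (hsymm : G.IsSymm)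
    (hidem : IsIdempotentElem G) (i : n) : G i i ∈ Set.Icc 0 1 := by
  have hsq : G i i = ∑ j, G i j ^ 2 := by
    conv_lhs => rw [← hidem.eq]
    simp [mul_apply, sq, hsymm.apply]
  have hnonneg : 0 ≤ G i i := hsq ▸ Finset.sum_nonneg fun j _ => sq_nonneg _
  have hle : G i i ^ 2 ≤ G i i :=
    hsq ▸ Finset.single_le_sum (f := fun j => G i j ^ 2) (fun j _ => sq_nonneg _)
      (Finset.mem_univ i)
  exact ⟨hnonneg, by nlinarith⟩

section Frames

variable {n : Type*} [Fintype n] [DecidableEq n]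

def frameTraces (A B : Matrix n n ℝ) (k : Type*) [Fintype k] [DecidableEq k] : Set ℝ :=
  {t | ∃ P : Matrix n k ℝ, Pᵀ * B * P = 1 ∧ t = trace (Pᵀ * A * P)}

lemma frameTraces_congr (A B : Matrix n n ℝ) {S : Matrix n n ℝ} (hS : IsUnit S) (k : Type*)
    [Fintype k] [DecidableEq k] :
    frameTraces (Sᵀ * A * S) (Sᵀ * B * S) k = frameTraces A B k := by
  have hconj : ∀ (M : Matrix n n ℝ) (P : Matrix n k ℝ),
      Pᵀ * (Sᵀ * M * S) * P = (S * P)ᵀ * M * (S * P) := fun M P => by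
    simp only [transpose_mul, Matrix.mul_assoc]
  ext t
  constructor
  · rintro ⟨P, hP, rfl⟩
    exact ⟨S * P, hconj B P ▸ hP, hconj A P ▸ rfl⟩
  · rintro ⟨Q, hQ, rfl⟩
    have hSQ : S * (S⁻¹ * Q) = Q := by
      rw [← Matrix.mul_assoc, mul_nonsing_inv _ ((isUnit_iff_isUnit_det S).1 hS), Matrix.one_mul]
    exact ⟨S⁻¹ * Q, by rwa [hconj, hSQ], by rw [hconj, hSQ]⟩

lemma IsHermitian.frameTraces_one_eq {C : Matrix n n ℝ} (hC : C.IsHermitian) (k : Type*)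
    [Fintype k] [DecidableEq k] :
    frameTraces C 1 k = frameTraces (diagonal hC.eigenvalues) 1 k := by
  set U : Matrix n n ℝ := ↑hC.eigenvectorUnitary
  have hUt : Uᵀ = star U := (conjTranspose_eq_transpose_of_trivial U).symm
  have hC' : C = Uᵀᵀ * diagonal hC.eigenvalues * Uᵀ := by
    conv_lhs => rw [hC.spectral_theorem, Unitary.conjStarAlgAut_apply]
    rw [transpose_transpose, hUt]
    simp [U]
  have h1 : (1 : Matrix n n ℝ) = Uᵀᵀ * 1 * Uᵀ := by
    rw [transpose_transpose, hUt, Matrix.mul_one,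
      Unitary.mul_star_self_of_mem hC.eigenvectorUnitary.2]
  have hUnit : IsUnit Uᵀ := hUt ▸ (Unitary.toUnits hC.eigenvectorUnitary)⁻¹.isUnit
  rw [← frameTraces_congr (diagonal hC.eigenvalues) 1 hUnit, ← hC', ← h1]

theorem isLeast_frameTraces_diagonal {m d : ℕ} (hd : d ≤ m) (μ : Fin m → ℝ)
    (σ : Equiv.Perm (Fin m)) (hσ : Monotone (μ ∘ σ)) :
    IsLeast (frameTraces (diagonal μ) 1 (Fin d)) (∑ i : Fin d, μ (σ (Fin.castLE hd i))) := by
  constructor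
  · let f : Fin d ↪ Fin m := (Fin.castLEEmb hd).trans σ.toEmbedding
    refine ⟨(1 : Matrix (Fin m) (Fin m) ℝ).submatrix id f, ?_, ?_⟩
    · rw [transpose_submatrix_one_mul_mul_submatrix_one, submatrix_one_embedding]
    · rw [transpose_submatrix_one_mul_mul_submatrix_one, submatrix_diagonal_embedding,
        trace_diagonal]
      rfl
  · rintro _ ⟨R, hR, rfl⟩
    rw [Matrix.mul_one] at hR
    set s : Fin m → ℝ := fun i => (R * Rᵀ) i i
    have hs : ∀ i, s i ∈ Set.Icc 0 1 := by
      refine IsSymm.apply_self_mem_Icc_of_isIdempotentElem (G := R * Rᵀ) ?_ ?_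
      · simp [IsSymm, transpose_mul]
      · change R * Rᵀ * (R * Rᵀ) = R * Rᵀ
        rw [Matrix.mul_assoc, ← Matrix.mul_assoc Rᵀ, hR, Matrix.one_mul]
    have hsum : ∑ i, s (σ i) = d := by
      rw [Equiv.sum_comp σ s]
      simpa using sum_diag_mul_transpose_of_transpose_mul_eq_one hR
    calc ∑ i : Fin d, μ (σ (Fin.castLE hd i))
        ≤ ∑ i, μ (σ i) * s (σ i) := hσ.sum_castLE_le_sum_mul hd (fun i => hs (σ i)) hsum
      _ = ∑ i, μ i * s i := Equiv.sum_comp σ fun i => μ i * s i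
      _ = trace (Rᵀ * diagonal μ * R) := (trace_transpose_mul_diagonal_mul R μ).symm

end Frames

end Matrix

theorem trace_min_eq_sum_smallest_generalized_eigenvalues_general
    (m d : ℕ) (hd : d ≤ m)
    (A B : Matrix (Fin m) (Fin m) ℝ)
    (hB : B.PosDef)
    (Bs : Matrix (Fin m) (Fin m) ℝ) (hBs : Bs = hB.posSemidef.sqrt)
    (Cmat : Matrix (Fin m) (Fin m) ℝ) (hCmat : Cmat = Bs⁻¹ * A * Bs⁻¹)
    (hC : Cmat.IsHermitian) :
    ∃ σ : Equiv.Perm (Fin m), Monotone (hC.eigenvalues ∘ σ) ∧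
      IsLeast
        {t : ℝ | ∃ P : Matrix (Fin m) (Fin d) ℝ,
          Pᵀ * B * P = 1 ∧ t = Matrix.trace (Pᵀ * A * P)}
        (∑ i : Fin d, hC.eigenvalues (σ (Fin.castLE hd i))) := by
  have hBsT : Bsᵀ = Bs := by
    simpa [IsHermitian, conjTranspose_eq_transpose_of_trivial] using
      hBs ▸ hB.posSemidef.isHermitian_sqrt
  have hBsB : Bs * Bs = B := hBs ▸ hB.posSemidef.sqrt_mul_self
  have hBsUnit : IsUnit Bs := hBs ▸ hB.isUnit_sqrt
  have hA : A = Bsᵀ * Cmat * Bs := by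
    have hdet := (isUnit_iff_isUnit_det Bs).1 hBsUnit
    rw [hBsT, hCmat, ← Matrix.mul_assoc, ← Matrix.mul_assoc, mul_nonsing_inv _ hdet,
      Matrix.one_mul, Matrix.mul_assoc, nonsing_inv_mul _ hdet, Matrix.mul_one]
  have hB' : B = Bsᵀ * 1 * Bs := by rw [hBsT, Matrix.mul_one, hBsB]
  refine ⟨Tuple.sort hC.eigenvalues, Tuple.monotone_sort _, ?_⟩
  change IsLeast (frameTraces A B (Fin d)) _
  rw [hA, hB', frameTraces_congr _ _ hBsUnit, hC.frameTraces_one_eq]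
  exact isLeast_frameTraces_diagonal hd _ _ (Tuple.monotone_sort _)

theorem trace_min_eq_sum_smallest_generalized_eigenvalues
    (m d : ℕ) (hd : d ≤ m)
    (A B : Matrix (Fin m) (Fin m) ℝ)
    (hA : A.IsHermitian) (hB : B.PosDef)
    (Bs : Matrix (Fin m) (Fin m) ℝ) (hBs : Bs = hB.posSemidef.sqrt)
    (Cmat : Matrix (Fin m) (Fin m) ℝ) (hCmat : Cmat = Bs⁻¹ * A * Bs⁻¹)
    (hC : Cmat.IsHermitian) :
    ∃ σ : Equiv.Perm (Fin m), Monotone (hC.eigenvalues ∘ σ) ∧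
      IsLeast
        {t : ℝ | ∃ P : Matrix (Fin m) (Fin d) ℝ,
          Pᵀ * B * P = 1 ∧ t = Matrix.trace (Pᵀ * A * P)}
        (∑ i : Fin d, hC.eigenvalues (σ (Fin.castLE hd i))) :=
  trace_min_eq_sum_smallest_generalized_eigenvalues_general m d hd A B hB Bs hBs Cmat hCmat hC
end

section
/- For α > 0 and fixed P, X, E, V, substituting the optimal F* = (PᵀXE + αPᵀXVG)(αGᵀG + I_C)⁻¹ into f(F) = ‖PᵀXE − F‖_F² + α‖PᵀXV − FGᵀ‖_F² yields f(F*) = tr(Pᵀ X R Xᵀ P) where R = EEᵀ + αVVᵀ − (E + αVG)(αGᵀG + I_C)⁻¹(E + αVG)ᵀ; moreover R is symmetric. -/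
open Matrix BigOperators

lemma sum_sq_eq_trace' {a b : ℕ} (C : Matrix (Fin a) (Fin b) ℝ) :
    ∑ i, ∑ j, (C i j)^2 = Matrix.trace (C * Cᵀ) := by
  simp [Matrix.trace, Matrix.mul_apply, Matrix.diag, sq]

theorem optimal_F_substitution_trace_form
    (m n d C : ℕ) (α : ℝ) (hα : 0 < α)
    (X : Matrix (Fin m) (Fin n) ℝ) (E : Matrix (Fin n) (Fin C) ℝ)
    (V : Matrix (Fin n) (Fin n) ℝ) (G : Matrix (Fin n) (Fin C) ℝ)
    (P : Matrix (Fin m) (Fin d) ℝ)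
    (f : Matrix (Fin d) (Fin C) ℝ → ℝ)
    (hf : f = fun F => (∑ i, ∑ j, ((Pᵀ * X * E) i j - F i j) ^ 2)
        + α * (∑ i, ∑ j, ((Pᵀ * X * V) i j - (F * Gᵀ) i j) ^ 2))
    (Fstar : Matrix (Fin d) (Fin C) ℝ)
    (hFstar : Fstar = (Pᵀ * X * E + α • (Pᵀ * X * V * G)) * (α • (Gᵀ * G) + 1)⁻¹)
    (R : Matrix (Fin n) (Fin n) ℝ)
    (hR : R = E * Eᵀ + α • (V * Vᵀ)
        - (E + α • (V * G)) * (α • (Gᵀ * G) + 1)⁻¹ * (E + α • (V * G))ᵀ) :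
    f Fstar = Matrix.trace (Pᵀ * X * R * Xᵀ * P) ∧ Rᵀ = R := by
  classical
  set A := Pᵀ * X * E with hA
  set B := Pᵀ * X * V with hB
  set N := α • (Gᵀ * G) + (1 : Matrix (Fin C) (Fin C) ℝ) with hN
  set M := N⁻¹ with hMdef
  set S := A + α • (B * G) with hS
  -- N is positive definite, hence invertible; M is symmetric
  have hNpd : N.PosDef := by
    have h1 := Matrix.posSemidef_conjTranspose_mul_self (Real.sqrt α • G)
    rw [Matrix.conjTranspose_eq_transpose_of_trivial] at h1
    have h2 : (Real.sqrt α • G)ᵀ * (Real.sqrt α • G) = α • (Gᵀ * G) := by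
      rw [Matrix.transpose_smul, Matrix.smul_mul, Matrix.mul_smul, smul_smul,
        Real.mul_self_sqrt hα.le]
    rw [h2] at h1
    exact Matrix.PosDef.posSemidef_add h1 Matrix.PosDef.one
  have hdet : IsUnit N.det := isUnit_iff_ne_zero.mpr hNpd.det_pos.ne'
  have hNM : N * M = 1 := Matrix.mul_nonsing_inv N hdet
  have hMN : M * N = 1 := Matrix.nonsing_inv_mul N hdet
  have hNsym : Nᵀ = N := by
    rw [hN]
    simp [Matrix.transpose_add, Matrix.transpose_smul, Matrix.transpose_mul]
  have hMsym : Mᵀ = M := by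
    rw [hMdef, Matrix.transpose_nonsing_inv, hNsym]
  -- symmetry of R
  have hRsym : Rᵀ = R := by
    rw [hR]
    simp only [Matrix.transpose_sub, Matrix.transpose_add, Matrix.transpose_smul,
      Matrix.transpose_mul, Matrix.transpose_transpose, hMsym, Matrix.mul_assoc]
  refine ⟨?_, hRsym⟩
  -- rewrite the objective in terms of traces
  have hconv : ∀ (a b : ℕ) (Y Z : Matrix (Fin a) (Fin b) ℝ),
      (∑ i, ∑ j, (Y i j - Z i j)^2) = Matrix.trace ((Y - Z) * (Y - Z)ᵀ) := by
    intro a b Y Z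
    rw [← sum_sq_eq_trace']
    simp [Matrix.sub_apply]
  have tr_tp : ∀ (a b : ℕ) (Y Z : Matrix (Fin a) (Fin b) ℝ),
      Matrix.trace (Y * Zᵀ) = Matrix.trace (Z * Yᵀ) := by
    intro a b Y Z
    rw [← Matrix.trace_transpose (Y * Zᵀ), Matrix.transpose_mul, Matrix.transpose_transpose,
      Matrix.trace_mul_comm]
  have expand : ∀ (a b : ℕ) (Y Z : Matrix (Fin a) (Fin b) ℝ),
      Matrix.trace ((Y - Z) * (Y - Z)ᵀ)
        = Matrix.trace (Y * Yᵀ) - 2 * Matrix.trace (Z * Yᵀ) + Matrix.trace (Z * Zᵀ) := by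
    intro a b Y Z
    rw [Matrix.transpose_sub, Matrix.sub_mul, Matrix.mul_sub, Matrix.mul_sub,
      Matrix.trace_sub, Matrix.trace_sub, Matrix.trace_sub, tr_tp a b Y Z]
    ring
  -- key identity 1: linear terms
  have hST : Sᵀ = Aᵀ + α • (Gᵀ * Bᵀ) := by
    rw [hS]
    simp [Matrix.transpose_add, Matrix.transpose_smul, Matrix.transpose_mul]
  have key1 : Matrix.trace (S * M * Aᵀ) + α * Matrix.trace (S * M * Gᵀ * Bᵀ)
      = Matrix.trace (S * M * Sᵀ) := by
    have e : S * M * Sᵀ = S * M * Aᵀ + α • (S * M * Gᵀ * Bᵀ) := by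
      rw [hST]
      simp [Matrix.mul_add, Matrix.mul_smul, Matrix.mul_assoc]
    rw [e, Matrix.trace_add, Matrix.trace_smul, smul_eq_mul]
  -- key identity 2: quadratic terms
  have key2 : Matrix.trace ((S * M) * (S * M)ᵀ)
      + α * Matrix.trace ((S * M * Gᵀ) * (S * M * Gᵀ)ᵀ) = Matrix.trace (S * M * Sᵀ) := by
    have e1 : (S * M) * (S * M)ᵀ + α • ((S * M * Gᵀ) * (S * M * Gᵀ)ᵀ)
        = S * M * N * (M * Sᵀ) := by
      rw [hN]
      simp only [Matrix.transpose_mul, Matrix.transpose_transpose, hMsym,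
        Matrix.mul_add, Matrix.add_mul, Matrix.mul_smul, Matrix.smul_mul,
        Matrix.mul_one, Matrix.one_mul, Matrix.mul_assoc]
      abel
    have e2 : S * M * N * (M * Sᵀ) = S * M * Sᵀ := by
      rw [Matrix.mul_assoc S M N, hMN, Matrix.mul_one, Matrix.mul_assoc]
    calc Matrix.trace ((S * M) * (S * M)ᵀ) + α * Matrix.trace ((S * M * Gᵀ) * (S * M * Gᵀ)ᵀ)
        = Matrix.trace ((S * M) * (S * M)ᵀ + α • ((S * M * Gᵀ) * (S * M * Gᵀ)ᵀ)) := by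
          rw [Matrix.trace_add, Matrix.trace_smul, smul_eq_mul]
      _ = Matrix.trace (S * M * Sᵀ) := by rw [e1, e2]
  -- the right-hand side
  have hmat : Pᵀ * X * R * Xᵀ * P = A * Aᵀ + α • (B * Bᵀ) - S * M * Sᵀ := by
    rw [hR, hS, hA, hB]
    simp only [Matrix.mul_add, Matrix.add_mul, Matrix.mul_sub, Matrix.sub_mul,
      Matrix.mul_smul, Matrix.smul_mul, Matrix.transpose_mul, Matrix.transpose_add,
      Matrix.transpose_smul, Matrix.transpose_transpose, Matrix.mul_assoc, smul_smul]
  have hRtr : Matrix.trace (Pᵀ * X * R * Xᵀ * P)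
      = Matrix.trace (A * Aᵀ) + α * Matrix.trace (B * Bᵀ) - Matrix.trace (S * M * Sᵀ) := by
    rw [hmat, Matrix.trace_sub, Matrix.trace_add, Matrix.trace_smul, smul_eq_mul]
  -- put everything together
  rw [hf]
  simp only
  rw [hconv d C A Fstar, hconv d n B (Fstar * Gᵀ), hFstar,
    expand d C A (S * M), expand d n B (S * M * Gᵀ)]
  linear_combination key2 - 2 * key1 - hRtr
end
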